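/- arXiv:2209.04929 — 3 statements merged into one kernel-verified Lean document; each statement's English description precedes it below -/
import Mathlib

section
/- Let α₁,…,αₙ be linear forms on K^{ℓ+1} and let X be a rank-2 flat of the matroid they define, i.e. the span of the forms indexed by X is 2-dimensional. Then the space of linear relations among the forms in X (the kernel of the matrix whose columns are these forms) is spanned by relations of length three, i.e. relations supported on at most three indices. -/
/-- Let α₁,…,αₙ be linear forms on K^{ℓ+1} (nonzero, pairwise
non-proportional) and let X be a rank-2 flat of the matroid they define.  Then
the space of linear relations among the forms indexed by X is spanned by
relations of length at most three. -/
theorem rank_two_flat_relations_spanned_by_length_three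
    (K : Type*) [Field K] (ℓ n : ℕ)
    (α : Fin n → Module.Dual K (Fin (ℓ + 1) → K))
    (hne : ∀ i, α i ≠ 0)
    (hprop : ∀ i j : Fin n, i ≠ j → ∀ c : K, α i ≠ c • α j)
    (X : Set (Fin n))
    (hrank : Module.finrank K (Submodule.span K (α '' X)) = 2)
    (hclosed : ∀ j : Fin n, α j ∈ Submodule.span K (α '' X) → j ∈ X)
    (v : Fin n → K)
    (hsupp : ∀ i, i ∉ X → v i = 0)
    (hrel : ∑ i, v i • α i = 0) :
    v ∈ Submodule.span K
      {w : Fin n → K | (∑ i, w i • α i = 0) ∧ (∀ i, i ∉ X → w i = 0) ∧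
        (Function.support w).ncard ≤ 3} := by
  set S := {w : Fin n → K | (∑ i, w i • α i = 0) ∧ (∀ i, i ∉ X → w i = 0) ∧
        (Function.support w).ncard ≤ 3} with hS
  suffices H : ∀ m : ℕ, ∀ v : Fin n → K, (Function.support v).ncard ≤ m →
      (∀ i, i ∉ X → v i = 0) → (∑ i, v i • α i = 0) → v ∈ Submodule.span K S by
    exact H (Function.support v).ncard v le_rfl hsupp hrel
  intro m
  induction m with
  | zero =>
    intro v hcard hsupp hrel
    exact Submodule.subset_span ⟨hrel, hsupp, by omega⟩
  | succ m ih =>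
    intro v hcard hsupp hrel
    by_cases h3 : (Function.support v).ncard ≤ 3
    · exact Submodule.subset_span ⟨hrel, hsupp, h3⟩
    push_neg at h3
    have hfin : (Function.support v).Finite := Set.toFinite _
    -- pick three distinct elements of the support
    obtain ⟨i, hi⟩ : (Function.support v).Nonempty := by
      rw [← Set.ncard_pos hfin]; omega
    have hc1 : (Function.support v \ {i}).ncard = (Function.support v).ncard - 1 :=
      Set.ncard_diff_singleton_of_mem hi
    obtain ⟨j, hj⟩ : (Function.support v \ {i}).Nonempty := by
      rw [← Set.ncard_pos hfin.diff]; omega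
    have hc2 : ((Function.support v \ {i}) \ {j}).ncard
        = (Function.support v \ {i}).ncard - 1 :=
      Set.ncard_diff_singleton_of_mem hj
    obtain ⟨k, hk⟩ : ((Function.support v \ {i}) \ {j}).Nonempty := by
      rw [← Set.ncard_pos hfin.diff.diff]; omega
    have hji : j ≠ i := by simpa using hj.2
    have hkj : k ≠ j := by simpa using hk.2
    have hki : k ≠ i := by simpa using hk.1.2
    have hjs : j ∈ Function.support v := hj.1
    have hks : k ∈ Function.support v := hk.1.1
    have hiX : i ∈ X := by by_contra h; exact hi (hsupp i h)
    have hjX : j ∈ X := by by_contra h; exact hjs (hsupp j h)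
    have hkX : k ∈ X := by by_contra h; exact hks (hsupp k h)
    -- α i, α j independent and span the 2-dim space
    have hind : LinearIndependent K ![α i, α j] := by
      rw [LinearIndependent.pair_iff]
      intro s t hst
      by_contra hcon
      rcases eq_or_ne s 0 with hs | hs
      · subst hs
        simp only [zero_smul, zero_add] at hst
        rcases smul_eq_zero.mp hst with h | h
        · exact hcon ⟨rfl, h⟩
        · exact hne j h
      · have : α i = (s⁻¹ * (-t)) • α j := by
          rw [mul_smul, eq_inv_smul_iff₀ hs]
          linear_combination (norm := module) hst
        exact hprop i j (fun h => hji h.symm) _ this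
    have hle : Submodule.span K {α i, α j} ≤ Submodule.span K (α '' X) := by
      apply Submodule.span_le.mpr
      rintro x (rfl | rfl)
      · exact Submodule.subset_span ⟨i, hiX, rfl⟩
      · exact Submodule.subset_span ⟨j, hjX, rfl⟩
    have hfr2 : Module.finrank K (Submodule.span K {α i, α j}) = 2 := by
      have := finrank_span_eq_card (R := K) hind
      rw [Matrix.range_cons_cons_empty] at this
      simpa using this
    have heq : Submodule.span K {α i, α j} = Submodule.span K (α '' X) :=
      Submodule.eq_of_le_of_finrank_le hle (by rw [hrank, hfr2])
    have hkmem : α k ∈ Submodule.span K {α i, α j} := by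
      rw [heq]; exact Submodule.subset_span ⟨k, hkX, rfl⟩
    obtain ⟨a, b, hab⟩ := Submodule.mem_span_pair.mp hkmem
    -- the length-3 relation w
    set w : Fin n → K := fun t =>
      (if t = i then a else 0) + (if t = j then b else 0) + (if t = k then -1 else 0)
      with hw
    have hwrel : ∑ t, w t • α t = 0 := by
      simp only [hw, add_smul, Finset.sum_add_distrib, ite_smul, zero_smul,
        Finset.sum_ite_eq', Finset.mem_univ, if_true, neg_smul, one_smul]
      linear_combination (norm := module) hab
    have hwsupp : ∀ t, t ∉ X → w t = 0 := by
      intro t ht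
      have h1 : t ≠ i := fun h => ht (h ▸ hiX)
      have h2 : t ≠ j := fun h => ht (h ▸ hjX)
      have h3 : t ≠ k := fun h => ht (h ▸ hkX)
      simp [hw, h1, h2, h3]
    have hwsub : Function.support w ⊆ {i, j, k} := by
      intro t ht
      by_contra hcon
      simp only [Set.mem_insert_iff, Set.mem_singleton_iff, not_or] at hcon
      exact ht (by simp [hw, hcon.1, hcon.2.1, hcon.2.2])
    have hwcard : (Function.support w).ncard ≤ 3 := by
      calc (Function.support w).ncard ≤ ({i, j, k} : Set (Fin n)).ncard :=
            Set.ncard_le_ncard hwsub (Set.toFinite _)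
        _ ≤ 3 := by
            apply le_trans (Set.ncard_insert_le _ _)
            have := Set.ncard_insert_le j ({k} : Set (Fin n))
            simp only [Set.ncard_singleton] at this ⊢
            omega
    have hwS : w ∈ S := ⟨hwrel, hwsupp, hwcard⟩
    -- the reduced relation v'
    set v' : Fin n → K := v + (v k) • w with hv'
    have hv'k : v' k = 0 := by
      simp [hv', hw, hki, hkj]
    have hv'supp : Function.support v' ⊆ Function.support v \ {k} := by
      intro t ht
      constructor
      · rcases eq_or_ne t i with rfl | h1
        · exact hi
        rcases eq_or_ne t j with rfl | h2
        · exact hjs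
        rcases eq_or_ne t k with rfl | h3
        · exact absurd hv'k ht
        · have : v' t = v t := by simp [hv', hw, h1, h2, h3]
          simpa [Function.mem_support, this] using ht
      · simp only [Set.mem_singleton_iff]
        rintro rfl
        exact ht hv'k
    have hv'card : (Function.support v').ncard ≤ m := by
      have h1 : (Function.support v').ncard ≤ (Function.support v \ {k}).ncard :=
        Set.ncard_le_ncard hv'supp (Set.toFinite _)
      have h2 : (Function.support v \ {k}).ncard = (Function.support v).ncard - 1 :=
        Set.ncard_diff_singleton_of_mem hks
      omega
    have hv'X : ∀ t, t ∉ X → v' t = 0 := by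
      intro t ht
      simp [hv', hsupp t ht, hwsupp t ht]
    have hv'rel : ∑ t, v' t • α t = 0 := by
      simp only [hv', Pi.add_apply, Pi.smul_apply, add_smul, Finset.sum_add_distrib,
        hrel, smul_eq_mul, mul_smul, ← Finset.smul_sum, hwrel, smul_zero, add_zero]
    have hmem' : v' ∈ Submodule.span K S := ih v' hv'card hv'X hv'rel
    have : v = v' - (v k) • w := by
      simp [hv']
    rw [this]
    exact Submodule.sub_mem _ hmem' (Submodule.smul_mem _ _ (Submodule.subset_span hwS))
end

section
/- Suppose the hyperplane H₀ = V(α₀) contains no flat of rank at most k of the arrangement A(α) (rank-k general linear position). If β is defined by βⱼ = αⱼ + λⱼα₀ and β is a weak representation of the matroid M(α) up to rank k (every set of at most k of the αᵢ that is dependent has the corresponding βᵢ dependent), then H₀ contains no flat of rank at most k of A(β). -/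
/-- Suppose H₀ = V(α₀) contains no flat of rank at most k of
A(α) (equivalently α₀ is not in the span of any set of forms of rank ≤ k).
If βⱼ = αⱼ + λⱼ·α₀ gives a weak representation of M(α) up to rank k (every
dependent set of at most k of the αᵢ stays dependent for β), then H₀ contains
no flat of rank at most k of A(β). -/
theorem general_position_preserved_by_weak_representation
    (K : Type*) [Field K] (ℓ n k : ℕ)
    (α : Fin n → Module.Dual K (Fin (ℓ + 1) → K))
    (hne : ∀ i, α i ≠ 0)
    (hprop : ∀ i j : Fin n, i ≠ j → ∀ c : K, α i ≠ c • α j)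
    (α₀ : Module.Dual K (Fin (ℓ + 1) → K)) (hα₀ : α₀ ≠ 0)
    (hgen : ∀ T : Set (Fin n),
      Module.finrank K (Submodule.span K (α '' T)) ≤ k →
      α₀ ∉ Submodule.span K (α '' T))
    (lam : Fin n → K)
    (β : Fin n → Module.Dual K (Fin (ℓ + 1) → K))
    (hβ : ∀ j, β j = α j + lam j • α₀)
    (hweak : ∀ S : Finset (Fin n), S.card ≤ k →
      ¬ LinearIndependent K (fun i : S => α i) →
      ¬ LinearIndependent K (fun i : S => β i)) :
    ∀ T : Set (Fin n),
      Module.finrank K (Submodule.span K (β '' T)) ≤ k →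
      α₀ ∉ Submodule.span K (β '' T) := by
  classical
  intro T hT h₀
  set W := Submodule.span K (β '' T) with hW
  have hαsub : Submodule.span K (α '' T) ≤ W := by
    rw [Submodule.span_le]
    rintro _ ⟨j, hj, rfl⟩
    have hβj : β j ∈ W := Submodule.subset_span ⟨j, hj, rfl⟩
    have hαj : α j = β j - lam j • α₀ := by rw [hβ j]; abel
    rw [hαj]
    exact sub_mem hβj (Submodule.smul_mem _ _ h₀)
  have hαk : Module.finrank K (Submodule.span K (α '' T)) ≤ k :=
    le_trans (Submodule.finrank_mono hαsub) hT
  have hα₀T : α₀ ∉ Submodule.span K (α '' T) := hgen T hαk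
  have hlt : Submodule.span K (α '' T) < W :=
    lt_of_le_of_ne hαsub (fun h => hα₀T (h ▸ h₀))
  have hrlt : Module.finrank K (Submodule.span K (α '' T)) < Module.finrank K W :=
    Submodule.finrank_lt_finrank_of_lt hlt
  -- extract a basis of W from β '' T
  obtain ⟨s, hsub, hspan, hind⟩ := exists_linearIndependent K (β '' T)
  have hsfin : s.Finite := hind.setFinite
  have := hsfin.fintype
  choose g hgT hgβ using fun (x : s) => (hsub x.2 : (x : Module.Dual K (Fin (ℓ + 1) → K)) ∈ β '' T)
  let S : Finset (Fin n) := Finset.univ.image g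
  have hginj : Function.Injective g := by
    intro x y hxy
    have : (x : Module.Dual K (Fin (ℓ + 1) → K)) = y := by
      rw [← hgβ x, ← hgβ y, hxy]
    exact Subtype.ext this
  have hScard : S.card = Module.finrank K W := by
    have h1 : S.card = Fintype.card s := by
      simp [S, Finset.card_image_of_injective _ hginj]
    have h2 : Module.finrank K (Submodule.span K s) = s.toFinset.card :=
      finrank_span_set_eq_card hind
    rw [h1, hW, ← hspan, h2, Set.toFinset_card]
  -- β family on S is independent
  have hβS : LinearIndependent K (fun i : S => β i) := by
    have hmap : ∀ i : S, β (i : Fin n) ∈ s := by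
      rintro ⟨i, hi⟩
      obtain ⟨x, -, rfl⟩ := Finset.mem_image.mp hi
      simpa using (hgβ x) ▸ x.2
    let e : S → s := fun i => ⟨β i, hmap i⟩
    have heinj : Function.Injective e := by
      rintro ⟨i, hi⟩ ⟨j, hj⟩ hij
      obtain ⟨x, -, rfl⟩ := Finset.mem_image.mp hi
      obtain ⟨y, -, rfl⟩ := Finset.mem_image.mp hj
      have hx : β (g x) = x := hgβ x
      have hy : β (g y) = y := hgβ y
      have : (x : Module.Dual K (Fin (ℓ + 1) → K)) = y := by
        have := congrArg Subtype.val hij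
        simpa [e, hx, hy] using this
      exact Subtype.ext (congrArg g (Subtype.ext this))
    have : (fun i : S => β i) = (fun x : s => (x : Module.Dual K (Fin (ℓ + 1) → K))) ∘ e := by
      funext i; simp [e]
    rw [this]
    exact hind.comp e heinj
  have hSk : S.card ≤ k := by rw [hScard]; exact hT
  have hαS : LinearIndependent K (fun i : S => α i) := by
    by_contra h
    exact hweak S hSk h hβS
  -- so rank of span α''T is at least card S = finrank W, contradiction
  have hrange : Set.range (fun i : S => α i) = α '' (S : Set (Fin n)) := by
    ext v; simp
  have h1 : Module.finrank K (Submodule.span K (Set.range (fun i : S => α i)))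
      = S.card := by
    rw [finrank_span_eq_card hαS, Fintype.card_coe]
  have hsubT : (S : Set (Fin n)) ⊆ T := by
    intro i hi
    simp only [S, Finset.coe_image, Set.mem_image] at hi
    obtain ⟨x, -, rfl⟩ := hi
    exact hgT x
  have h2 : Submodule.span K (Set.range (fun i : S => α i)) ≤ Submodule.span K (α '' T) := by
    rw [hrange]
    exact Submodule.span_mono (Set.image_mono hsubT)
  have hfinal : S.card ≤ Module.finrank K (Submodule.span K (α '' T)) :=
    le_trans (le_of_eq h1.symm) (Submodule.finrank_mono h2)
  rw [hScard] at hfinal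
  exact absurd (lt_of_le_of_lt hfinal hrlt) (lt_irrefl _)
end

section
/- Let H₀ = V(α₀) be in rank-k general linear position with respect to A(α), and for scalars λ₁,…,λₙ define βⱼ = αⱼ + λⱼα₀. Then β is a weak representation of M(α) up to rank k ≥ 3 if and only if for every flat X of rank at most k−1 and every linear relation Σ_{j : X ⊆ Hⱼ} γⱼ αⱼ = 0 among the forms vanishing on X, one has Σ_{j : X ⊆ Hⱼ} γⱼ λⱼ = 0. -/
open Module Submodule

lemma sum_extend_dite {K M : Type*} [Field K] [AddCommMonoid M] [Module K M] {n : ℕ}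
    (S : Finset (Fin n)) (g : {x // x ∈ S} → K) (v : Fin n → M) :
    ∑ j, (if h : j ∈ S then g ⟨j, h⟩ else 0) • v j = ∑ i : S, g i • v i := by
  classical
  rw [← Finset.sum_subset (Finset.subset_univ S)
    (fun j _ hj => by simp [hj])]
  rw [← Finset.sum_attach S (fun j => (if h : j ∈ S then g ⟨j, h⟩ else 0) • v j)]
  exact Finset.sum_congr rfl (fun i _ => by simp)

lemma exists_finset_linearIndependent' {K V ι : Type*} [Field K] [AddCommGroup V] [Module K V]
    [FiniteDimensional K V] (v : ι → V) (X : Set ι) (m : ℕ)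
    (h : m ≤ Module.finrank K (Submodule.span K (v '' X))) :
    ∃ S : Finset ι, ↑S ⊆ X ∧ S.card = m ∧ LinearIndependent K (fun i : S => v i) := by
  obtain ⟨s, hsub, hspan, hind⟩ := exists_linearIndependent K (v '' X)
  have hfin : s.Finite := hind.setFinite
  haveI := hfin.fintype
  have hcard : Module.finrank K (Submodule.span K (v '' X)) = s.toFinset.card := by
    rw [← hspan]
    rw [finrank_span_set_eq_card hind]
  rw [hcard] at h
  obtain ⟨t, hts, htcard⟩ := Finset.exists_subset_card_eq (s := s.toFinset) h
  have htsub : (t : Set V) ⊆ s := fun x hx => by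
    have := hts hx; simpa using this
  have hindt : LinearIndependent K (fun x : (t : Set V) => x.1) :=
    LinearIndepOn.mono (R := K) (v := id) hind htsub
  -- choose preimages
  have hpre : ∀ x : (t : Set V), ∃ i, i ∈ X ∧ v i = (x : V) := by
    intro x
    have : (x : V) ∈ v '' X := hsub (htsub x.2)
    obtain ⟨i, hi, hvi⟩ := this
    exact ⟨i, hi, hvi⟩
  choose f hfX hfv using hpre
  have hfinj : Function.Injective f := by
    intro x y hxy
    have : (x : V) = y := by rw [← hfv x, ← hfv y, hxy]
    exact Subtype.ext this
  classical
  refine ⟨Finset.image (fun x => f x) t.attach, ?_, ?_, ?_⟩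
  · intro i hi
    simp only [Finset.coe_image, Set.mem_image] at hi
    obtain ⟨x, _, rfl⟩ := hi
    exact hfX _
  · rw [Finset.card_image_of_injective _ (fun a b hab => hfinj (by exact hab))]
    simp [htcard]
  · set S := Finset.image (fun x => f x) t.attach with hS
    have hmem : ∀ i : S, v i ∈ (t : Set V) := by
      intro ⟨i, hi⟩
      simp only [hS, Finset.mem_image, Finset.mem_attach] at hi
      obtain ⟨x, _, rfl⟩ := hi
      have := hfv ⟨x, x.2⟩
      simp only at this
      rw [this]
      exact x.2
    have hbij : Function.Bijective
        (fun i : (S : Set ι) => (⟨v i, hmem i⟩ : (t : Set V))) := by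
      constructor
      · intro a b hab
        obtain ⟨i, hi⟩ := a; obtain ⟨j, hj⟩ := b
        simp only [hS, Finset.mem_coe, Finset.mem_image, Finset.mem_attach] at hi hj
        obtain ⟨x, _, rfl⟩ := hi
        obtain ⟨y, _, rfl⟩ := hj
        have hx := hfv ⟨x, x.2⟩
        have hy := hfv ⟨y, y.2⟩
        simp only [Subtype.mk.injEq] at hab
        have : (⟨x, x.2⟩ : (t : Set V)) = ⟨y, y.2⟩ := Subtype.ext (by rw [← hx, ← hy]; exact hab)
        exact Subtype.ext (congrArg f this)
      · intro x
        refine ⟨⟨f ⟨x, x.2⟩, ?_⟩, ?_⟩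
        · simp only [hS, Finset.mem_coe, Finset.mem_image, Finset.mem_attach]
          exact ⟨⟨x, x.2⟩, Finset.mem_attach _ _, rfl⟩
        · exact Subtype.ext (by simpa using hfv ⟨x, x.2⟩)
    exact (linearIndependent_equiv (Equiv.ofBijective _ hbij)).mpr hindt

/-- With H₀ = V(α₀) in rank-k general linear position with
respect to A(α) and βⱼ = αⱼ + λⱼ·α₀, the map β is a weak representation of
M(α) up to rank k ≥ 3 iff for every flat X of rank at most k−1 and every
relation Σ γⱼαⱼ = 0 among the forms vanishing on X one has Σ γⱼλⱼ = 0. -/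
theorem weak_representation_iff_local_relation_conditions
    (K : Type*) [Field K] (ℓ n k : ℕ) (hk : 3 ≤ k)
    (α : Fin n → Module.Dual K (Fin (ℓ + 1) → K))
    (hne : ∀ i, α i ≠ 0)
    (hprop : ∀ i j : Fin n, i ≠ j → ∀ c : K, α i ≠ c • α j)
    (α₀ : Module.Dual K (Fin (ℓ + 1) → K)) (hα₀ : α₀ ≠ 0)
    (hgen : ∀ T : Set (Fin n),
      Module.finrank K (Submodule.span K (α '' T)) ≤ k →
      α₀ ∉ Submodule.span K (α '' T))
    (lam : Fin n → K)
    (β : Fin n → Module.Dual K (Fin (ℓ + 1) → K))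
    (hβ : ∀ j, β j = α j + lam j • α₀) :
    (∀ S : Finset (Fin n), S.card ≤ k →
        ¬ LinearIndependent K (fun i : S => α i) →
        ¬ LinearIndependent K (fun i : S => β i)) ↔
    (∀ X : Set (Fin n),
        (∀ j : Fin n, α j ∈ Submodule.span K (α '' X) → j ∈ X) →
        Module.finrank K (Submodule.span K (α '' X)) ≤ k - 1 →
        ∀ γ : Fin n → K, (∀ i, i ∉ X → γ i = 0) →
          (∑ i, γ i • α i = 0) → ∑ i, γ i * lam i = 0) := by
  classical
  constructor
  · -- forward
    intro hw X _hXcl hXrk γ hγsupp hγrel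
    by_contra hc
    set c : K := ∑ i, γ i * lam i with hcdef
    set r : ℕ := Module.finrank K (Submodule.span K (α '' X)) with hr
    -- sum of γ β = c • α₀
    have hsumβ : ∑ i, γ i • β i = c • α₀ := by
      simp only [hβ, smul_add, smul_smul]
      rw [Finset.sum_add_distrib, hγrel, zero_add, ← Finset.sum_smul]
    have hα₀mem : α₀ ∈ Submodule.span K (β '' X) := by
      have hmem : ∑ i, γ i • β i ∈ Submodule.span K (β '' X) := by
        apply Submodule.sum_mem
        intro i _
        by_cases hi : i ∈ X
        · exact Submodule.smul_mem _ _ (Submodule.subset_span ⟨i, hi, rfl⟩)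
        · rw [hγsupp i hi, zero_smul]; exact Submodule.zero_mem _
      rw [hsumβ] at hmem
      have := Submodule.smul_mem _ c⁻¹ hmem
      rwa [smul_smul, inv_mul_cancel₀ hc, one_smul] at this
    have hαX : Submodule.span K (α '' X) ≤ Submodule.span K (β '' X) := by
      rw [Submodule.span_le]
      rintro _ ⟨i, hi, rfl⟩
      have : α i = β i - lam i • α₀ := by rw [hβ]; abel
      rw [this]
      exact Submodule.sub_mem _ (Submodule.subset_span ⟨i, hi, rfl⟩)
        (Submodule.smul_mem _ _ hα₀mem)
    -- finrank span β X ≥ r + 1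
    have hrk : r + 1 ≤ Module.finrank K (Submodule.span K (β '' X)) := by
      by_contra hlt
      push_neg at hlt
      have hle : Module.finrank K (Submodule.span K (β '' X)) ≤ r := by omega
      have := Submodule.eq_of_le_of_finrank_le hαX hle
      rw [← this] at hα₀mem
      exact hgen X (by omega) hα₀mem
    obtain ⟨S, hSX, hScard, hSind⟩ :=
      exists_finset_linearIndependent' β X (r + 1) hrk
    have hSdep : ¬ LinearIndependent K (fun i : S => α i) := by
      intro hind
      have hcard : Fintype.card S = (Set.range fun i : S => α i).finrank K :=
        linearIndependent_iff_card_eq_finrank_span.mp hind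
      have hrange : Set.range (fun i : S => α i) = α '' (S : Set (Fin n)) := by
        ext x; constructor
        · rintro ⟨⟨i, hi⟩, rfl⟩; exact ⟨i, hi, rfl⟩
        · rintro ⟨i, hi, rfl⟩; exact ⟨⟨i, hi⟩, rfl⟩
      have hle : (Set.range fun i : S => α i).finrank K ≤ r := by
        rw [hrange]
        exact Submodule.finrank_mono
          (Submodule.span_mono (Set.image_mono (f := α) hSX))
      rw [Fintype.card_coe, hScard] at hcard
      omega
    exact hw S (by omega) hSdep hSind
  · -- backward
    intro hrel S hScard hSdep
    rw [Fintype.not_linearIndependent_iff] at hSdep ⊢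
    obtain ⟨g, hgsum, i₀, hgi₀⟩ := hSdep
    set γ : Fin n → K := fun j => if h : j ∈ S then g ⟨j, h⟩ else 0 with hγ
    have hγS : ∀ i : S, γ i = g i := by
      intro ⟨i, hi⟩; simp [hγ, hi]
    have hγ0 : ∀ j, j ∉ S → γ j = 0 := by
      intro j hj; simp [hγ, hj]
    set X : Set (Fin n) := {j | α j ∈ Submodule.span K (α '' (S : Set (Fin n)))} with hX
    have hSX : (S : Set (Fin n)) ⊆ X := fun i hi =>
      Submodule.subset_span ⟨i, hi, rfl⟩
    have hXspan : Submodule.span K (α '' X) ≤ Submodule.span K (α '' (S : Set (Fin n))) := by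
      rw [Submodule.span_le]
      rintro _ ⟨j, hj, rfl⟩
      exact hj
    have hclosed : ∀ j, α j ∈ Submodule.span K (α '' X) → j ∈ X := fun j hj => hXspan hj
    have hdep : ¬ LinearIndependent K (fun i : S => α i) :=
      Fintype.not_linearIndependent_iff.mpr ⟨g, hgsum, i₀, hgi₀⟩
    have hrange : Set.range (fun i : S => α i) = α '' (S : Set (Fin n)) := by
      ext x; constructor
      · rintro ⟨⟨i, hi⟩, rfl⟩; exact ⟨i, hi, rfl⟩
      · rintro ⟨i, hi, rfl⟩; exact ⟨⟨i, hi⟩, rfl⟩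
    have hrkS : Module.finrank K (Submodule.span K (α '' (S : Set (Fin n)))) ≤ S.card - 1 := by
      have hne' : Module.finrank K (Submodule.span K (α '' (S : Set (Fin n)))) ≠ S.card := by
        intro heq
        apply hdep
        rw [linearIndependent_iff_card_eq_finrank_span]
        simp only [Set.finrank]
        rw [hrange, Fintype.card_coe, heq]
      have hle : Module.finrank K (Submodule.span K (α '' (S : Set (Fin n)))) ≤ S.card := by
        have := finrank_range_le_card (R := K) (fun i : S => α i)
        simp only [Set.finrank] at this
        rw [hrange, Fintype.card_coe] at this
        exact this
      have hpos : 0 < S.card := Finset.card_pos.mpr ⟨i₀, i₀.2⟩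
      omega
    have hrkX : Module.finrank K (Submodule.span K (α '' X)) ≤ k - 1 := by
      have := Submodule.finrank_mono hXspan
      omega
    have hsupp : ∀ j, j ∉ X → γ j = 0 := fun j hj =>
      hγ0 j (fun hjS => hj (hSX hjS))
    have hγrel : ∑ j, γ j • α j = 0 := by
      simp only [hγ]
      rw [sum_extend_dite S g α]; exact hgsum
    have hlamsum : ∑ j, γ j * lam j = 0 := hrel X hclosed hrkX γ hsupp hγrel
    have hlamS : ∑ i : S, g i * lam i = 0 := by
      have h2 : ∑ j, γ j * lam j = ∑ i : S, g i * lam i := by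
        simp only [hγ]
        have := sum_extend_dite S g lam
        simpa only [smul_eq_mul] using this
      rw [← h2]
      exact hlamsum
    refine ⟨g, ?_, i₀, hgi₀⟩
    simp only [hβ, smul_add, smul_smul]
    rw [Finset.sum_add_distrib, hgsum, zero_add, ← Finset.sum_smul, hlamS, zero_smul]
end
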